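/- arXiv:1601.08017 — 8 statements merged into one kernel-verified Lean document; each statement's English description precedes it below -/
import Mathlib

section
/- For fixed positive reals m, k, τ, γ and λ > 0, the function f(λ) = 1/(1 + (γτλ + k)/(γλ(γτλ + k) + k²mλ)) is strictly monotonically increasing in λ on (0, ∞). -/
/-!
Dividing numerator and denominator of the inner fraction by `γτλ + k` rewrites the function as
`1 / (1 + 1 / q λ)` with `q λ = γ λ + k² m · λ / (γ τ λ + k)`. Both summands of `q` increase with `λ`,
the first strictly, and `q ↦ 1 / (1 + 1 / q)` is strictly increasing on positive reals.
-/

open Set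

lemma strictMonoOn_div_mul_add {c k : ℝ} (hc : 0 ≤ c) (hk : 0 < k) :
    StrictMonoOn (fun x : ℝ => x / (c * x + k)) (Ici 0) := by
  intro x hx y hy hxy
  simp only [mem_Ici] at hx hy
  rw [div_lt_div_iff₀ (by positivity) (by positivity)]
  nlinarith

lemma StrictMonoOn.one_div_one_add_one_div {s : Set ℝ} {q : ℝ → ℝ} (hq : StrictMonoOn q s)
    (hpos : ∀ x ∈ s, 0 < q x) : StrictMonoOn (fun x => 1 / (1 + 1 / q x)) s := by
  intro x hx y hy hxy
  have hinv : 1 / q y < 1 / q x := one_div_lt_one_div_of_lt (hpos x hx) (hq hx hy hxy)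
  have hden : 0 < 1 + 1 / q y := by have := hpos y hy; positivity
  exact one_div_lt_one_div_of_lt hden (by linarith)

theorem dapi_per_mode_loss_strictMono_in_lambda
    (m k τ γ : ℝ) (hm : 0 < m) (hk : 0 < k) (hτ : 0 < τ) (hγ : 0 < γ) :
    StrictMonoOn (fun lam : ℝ => 1 / (1 + (γ * τ * lam + k) /
        (γ * lam * (γ * τ * lam + k) + k ^ 2 * m * lam))) (Set.Ioi 0) := by
  set q : ℝ → ℝ := fun lam => γ * lam + k ^ 2 * m * (lam / (γ * τ * lam + k))
  have hq_mono : StrictMonoOn q (Ioi 0) := by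
    refine (strictMono_mul_left_of_pos hγ).strictMonoOn _ |>.add_monotone fun x hx y hy hxy => ?_
    have hfrac := (strictMonoOn_div_mul_add (by positivity : 0 ≤ γ * τ) hk).monotoneOn
      (Ioi_subset_Ici_self hx) (Ioi_subset_Ici_self hy) hxy
    exact mul_le_mul_of_nonneg_left hfrac (by positivity)
  have hq_pos : ∀ x ∈ Ioi (0 : ℝ), 0 < q x := fun x (hx : 0 < x) => by positivity
  refine (hq_mono.one_div_one_add_one_div hq_pos).congr fun x (hx : 0 < x) => ?_
  have hN : 0 < γ * τ * x + k := by positivity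
  simp only [q]
  field_simp
end

section
/- For fixed positive reals γ, τ, λ, m, the function k ↦ 1/(1 + (γτλ + k)/(γλ(γτλ + k) + k²mλ)) is strictly increasing in k on (0, ∞), and tends to 1 as k → ∞ and to γλ/(γλ + 1) as k → 0⁺. -/
/-!
Writing `N = γτλ + k` and `D = γλ N + k² m λ`, the loss is `1 / (1 + N / D) = 1 - 1 / (1 + D / N)`
with `D / N = γλ + m λ · k² / (γτλ + k)`. The map `k ↦ k² / (a + k)` is strictly increasing on
`[0, ∞)`, vanishes at `0` and grows at least like `k - a`, so the loss increases strictly from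
`1 - 1 / (1 + γλ) = γλ / (γλ + 1)` at `k = 0` towards `1`.
-/

open Filter Set Topology

section

variable {a b c : ℝ}

theorem strictMonoOn_sq_div_add (ha : 0 < a) :
    StrictMonoOn (fun k : ℝ => k ^ 2 / (a + k)) (Ici 0) := by
  intro x (hx : 0 ≤ x) y (hy : 0 ≤ y) hxy
  rw [div_lt_div_iff₀ (by positivity) (by positivity)]
  -- `y² (a + x) - x² (a + y) = (y - x) (a (x + y) + x y)`
  nlinarith [mul_pos (sub_pos.2 hxy) (add_pos_of_pos_of_nonneg (mul_pos ha (by linarith : 0 < x + y))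
    (mul_nonneg hx hy))]

theorem tendsto_sq_div_add_atTop (a : ℝ) :
    Tendsto (fun k : ℝ => k ^ 2 / (a + k)) atTop atTop := by
  refine tendsto_atTop_mono' _ ?_ (tendsto_atTop_add_const_right _ (-a) tendsto_id)
  filter_upwards [eventually_gt_atTop (-a)] with k hk
  rw [id, le_div_iff₀ (by linarith)]
  nlinarith [sq_nonneg a]

theorem strictMonoOn_one_sub_inv_sq_div_add (ha : 0 < a) (hb : 0 < b) (hc : 0 ≤ c) :
    StrictMonoOn (fun k : ℝ => 1 - (1 + c + b * (k ^ 2 / (a + k)))⁻¹) (Ici 0) := by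
  intro x (hx : 0 ≤ x) y hy hxy
  have hpos : 0 < 1 + c + b * (x ^ 2 / (a + x)) := by positivity
  have hlt := strictMonoOn_sq_div_add ha hx hy hxy
  exact sub_lt_sub_left (inv_strictAnti₀ hpos (by gcongr)) 1

theorem tendsto_one_sub_inv_sq_div_add_atTop (hb : 0 < b) :
    Tendsto (fun k : ℝ => 1 - (1 + c + b * (k ^ 2 / (a + k)))⁻¹) atTop (𝓝 1) := by
  have hden : Tendsto (fun k : ℝ => 1 + c + b * (k ^ 2 / (a + k))) atTop atTop :=
    tendsto_atTop_add_const_left _ _ ((tendsto_sq_div_add_atTop a).const_mul_atTop hb)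
  simpa using tendsto_const_nhds.sub (tendsto_inv_atTop_zero.comp hden)

theorem tendsto_one_sub_inv_sq_div_add_nhdsGT_zero (ha : 0 < a) (hc : 0 ≤ c) :
    Tendsto (fun k : ℝ => 1 - (1 + c + b * (k ^ 2 / (a + k)))⁻¹) (𝓝[>] 0) (𝓝 (c / (c + 1))) := by
  have hcont : ContinuousAt (fun k : ℝ => 1 - (1 + c + b * (k ^ 2 / (a + k)))⁻¹) 0 := by
    have hden : 1 + c + b * ((0 : ℝ) ^ 2 / (a + 0)) ≠ 0 := by
      rw [zero_pow two_ne_zero, zero_div, mul_zero]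
      positivity
    fun_prop (disch := first | exact hden | simpa using ha.ne')
  have hval : 1 - (1 + c + b * ((0 : ℝ) ^ 2 / (a + 0)))⁻¹ = c / (c + 1) := by
    field_simp
    ring
  simpa only [hval] using (hcont.continuousWithinAt (s := Ioi 0)).tendsto

end

theorem dapi_loss_eq_one_sub_inv (γ τ lam m k : ℝ) (hγ : 0 < γ) (hτ : 0 < τ) (hlam : 0 < lam)
    (hm : 0 < m) (hk : 0 < k) :
    1 / (1 + (γ * τ * lam + k) / (γ * lam * (γ * τ * lam + k) + k ^ 2 * m * lam))
      = 1 - (1 + γ * lam + m * lam * (k ^ 2 / (γ * τ * lam + k)))⁻¹ := by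
  field_simp
  ring

theorem dapi_per_mode_loss_in_k
    (γ τ lam m : ℝ) (hγ : 0 < γ) (hτ : 0 < τ) (hlam : 0 < lam) (hm : 0 < m) :
    StrictMonoOn (fun k : ℝ => 1 / (1 + (γ * τ * lam + k) /
        (γ * lam * (γ * τ * lam + k) + k ^ 2 * m * lam))) (Set.Ioi 0) ∧
    Filter.Tendsto (fun k : ℝ => 1 / (1 + (γ * τ * lam + k) /
        (γ * lam * (γ * τ * lam + k) + k ^ 2 * m * lam))) Filter.atTop (nhds 1) ∧
    Filter.Tendsto (fun k : ℝ => 1 / (1 + (γ * τ * lam + k) /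
        (γ * lam * (γ * τ * lam + k) + k ^ 2 * m * lam)))
      (nhdsWithin 0 (Set.Ioi 0)) (nhds (γ * lam / (γ * lam + 1))) := by
  have ha : 0 < γ * τ * lam := by positivity
  have hb : 0 < m * lam := by positivity
  have hc : 0 ≤ γ * lam := by positivity
  have heq : EqOn (fun k : ℝ => 1 - (1 + γ * lam + m * lam * (k ^ 2 / (γ * τ * lam + k)))⁻¹)
      (fun k => 1 / (1 + (γ * τ * lam + k) / (γ * lam * (γ * τ * lam + k) + k ^ 2 * m * lam)))
      (Ioi 0) := fun k hk => (dapi_loss_eq_one_sub_inv γ τ lam m k hγ hτ hlam hm hk).symm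
  refine ⟨?_, ?_, ?_⟩
  · exact ((strictMonoOn_one_sub_inv_sq_div_add ha hb hc).mono Ioi_subset_Ici_self).congr heq
  · exact (tendsto_one_sub_inv_sq_div_add_atTop hb).congr'
      (eventually_gt_atTop 0 |>.mono fun k hk => heq hk)
  · exact (tendsto_one_sub_inv_sq_div_add_nhdsGT_zero ha hc).congr'
      (eventually_mem_nhdsWithin.mono fun k hk => heq hk)
end

section
/- Let N, b, m, τ, k be positive reals with Nbmτ > 1. Then the function g(γ) = 1/(1 + (γτNb + k)/(γNb(γτNb + k) + k²mNb)), defined for γ ≥ 0, attains its unique minimum over [0, ∞) at γ* = (k/(Nbτ))(√(Nbmτ) − 1) > 0. -/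
/-!
Writing `u = γ τ λ + k` for the Laplacian eigenvalue `λ = N b`, the reciprocal of the ratio inside
`g` is `(u - k) / τ + k² m λ / u`, which by AM-GM is smallest exactly when `u = k √(λ m τ)`,
i.e. at `γ = γ*`; the condition `λ m τ > 1` makes `γ*` positive. Since `g = 1 / (1 + ratio)`,
minimising `g` means maximising the ratio, and cross-multiplying the two ratios leaves the
perfect square `k √(λ m τ) τ λ² (γ - γ*)²`.
-/

namespace DAPI

noncomputable section

def h2Ratio (lam m τ k γ : ℝ) : ℝ :=
  (γ * τ * lam + k) / (γ * lam * (γ * τ * lam + k) + k ^ 2 * m * lam)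

def h2Factor (lam m τ k γ : ℝ) : ℝ :=
  1 / (1 + h2Ratio lam m τ k γ)

def optimalGain (lam m τ k : ℝ) : ℝ :=
  k / (lam * τ) * (√(lam * m * τ) - 1)

variable {lam m τ k γ : ℝ}

theorem optimalGain_pos (hlam : 0 < lam) (hτ : 0 < τ) (hk : 0 < k)
    (hcond : 1 < lam * m * τ) : 0 < optimalGain lam m τ k := by
  have hS : 1 < √(lam * m * τ) := by rwa [Real.lt_sqrt zero_le_one, one_pow]
  unfold optimalGain
  exact mul_pos (by positivity) (by linarith)

theorem h2Ratio_denom_pos (hlam : 0 < lam) (hm : 0 < m) (hτ : 0 < τ) (hk : 0 < k)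
    (hγ : 0 ≤ γ) : 0 < γ * lam * (γ * τ * lam + k) + k ^ 2 * m * lam := by
  positivity

theorem h2Ratio_pos (hlam : 0 < lam) (hm : 0 < m) (hτ : 0 < τ) (hk : 0 < k)
    (hγ : 0 ≤ γ) : 0 < h2Ratio lam m τ k γ :=
  div_pos (by positivity) (h2Ratio_denom_pos hlam hm hτ hk hγ)

theorem optimalGain_mul_add (hlam : 0 < lam) (hτ : 0 < τ) :
    optimalGain lam m τ k * τ * lam + k = k * √(lam * m * τ) := by
  unfold optimalGain
  field_simp
  ring

theorem h2Ratio_cross_sub (hlam : 0 < lam) (hτ : 0 < τ) (hmτ : 0 ≤ lam * m * τ) :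
    let γ₀ := optimalGain lam m τ k
    (γ₀ * τ * lam + k) * (γ * lam * (γ * τ * lam + k) + k ^ 2 * m * lam) -
        (γ * τ * lam + k) * (γ₀ * lam * (γ₀ * τ * lam + k) + k ^ 2 * m * lam) =
      k * √(lam * m * τ) * τ * lam ^ 2 * (γ - γ₀) ^ 2 := by
  intro γ₀
  have hS := Real.mul_self_sqrt hmτ
  have hu : γ₀ * τ * lam + k = k * √(lam * m * τ) := optimalGain_mul_add hlam hτ
  linear_combination (lam * (γ - γ₀) * k ^ 2) * hS +
    (lam * (γ - γ₀) * (γ * τ * lam + k + k * √(lam * m * τ))) * hu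

theorem h2Ratio_lt_h2Ratio_optimalGain (hlam : 0 < lam) (hm : 0 < m) (hτ : 0 < τ)
    (hk : 0 < k) (hcond : 1 ≤ lam * m * τ) (hγ : 0 ≤ γ) (hne : γ ≠ optimalGain lam m τ k) :
    h2Ratio lam m τ k γ < h2Ratio lam m τ k (optimalGain lam m τ k) := by
  have hS : 1 ≤ √(lam * m * τ) := Real.one_le_sqrt.mpr hcond
  have hγ₀ : 0 ≤ optimalGain lam m τ k := mul_nonneg (by positivity) (by linarith)
  have hsq : 0 < k * √(lam * m * τ) * τ * lam ^ 2 * (γ - optimalGain lam m τ k) ^ 2 :=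
    mul_pos (by positivity) (sq_pos_of_ne_zero (sub_ne_zero.mpr hne))
  unfold h2Ratio
  rw [div_lt_div_iff₀ (h2Ratio_denom_pos hlam hm hτ hk hγ)
    (h2Ratio_denom_pos hlam hm hτ hk hγ₀)]
  linarith [h2Ratio_cross_sub (m := m) (k := k) (γ := γ) hlam hτ (by linarith)]

theorem h2Factor_optimalGain_lt (hlam : 0 < lam) (hm : 0 < m) (hτ : 0 < τ) (hk : 0 < k)
    (hcond : 1 ≤ lam * m * τ) (hγ : 0 ≤ γ) (hne : γ ≠ optimalGain lam m τ k) :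
    h2Factor lam m τ k (optimalGain lam m τ k) < h2Factor lam m τ k γ :=
  one_div_lt_one_div_of_lt (by linarith [h2Ratio_pos hlam hm hτ hk hγ])
    (by linarith [h2Ratio_lt_h2Ratio_optimalGain hlam hm hτ hk hcond hγ hne])

end

end DAPI

open DAPI in
theorem dapi_optimal_gamma_complete_graph
    (N b m τ k : ℝ) (hN : 0 < N) (hb : 0 < b) (hm : 0 < m) (hτ : 0 < τ) (hk : 0 < k)
    (hcond : 1 < N * b * m * τ) :
    0 < (k / (N * b * τ)) * (Real.sqrt (N * b * m * τ) - 1) ∧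
    (∀ γ : ℝ, 0 ≤ γ →
      1 / (1 + ((k / (N * b * τ)) * (Real.sqrt (N * b * m * τ) - 1) * τ * (N * b) + k) /
          ((k / (N * b * τ)) * (Real.sqrt (N * b * m * τ) - 1) * (N * b) *
            ((k / (N * b * τ)) * (Real.sqrt (N * b * m * τ) - 1) * τ * (N * b) + k) +
            k ^ 2 * m * (N * b)))
        ≤ 1 / (1 + (γ * τ * (N * b) + k) /
          (γ * (N * b) * (γ * τ * (N * b) + k) + k ^ 2 * m * (N * b)))) ∧
    (∀ γ : ℝ, 0 ≤ γ → γ ≠ (k / (N * b * τ)) * (Real.sqrt (N * b * m * τ) - 1) →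
      1 / (1 + ((k / (N * b * τ)) * (Real.sqrt (N * b * m * τ) - 1) * τ * (N * b) + k) /
          ((k / (N * b * τ)) * (Real.sqrt (N * b * m * τ) - 1) * (N * b) *
            ((k / (N * b * τ)) * (Real.sqrt (N * b * m * τ) - 1) * τ * (N * b) + k) +
            k ^ 2 * m * (N * b)))
        < 1 / (1 + (γ * τ * (N * b) + k) /
          (γ * (N * b) * (γ * τ * (N * b) + k) + k ^ 2 * m * (N * b)))) := by
  have hlam : 0 < N * b := mul_pos hN hb
  have hlt : ∀ γ, 0 ≤ γ → γ ≠ optimalGain (N * b) m τ k →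
      h2Factor (N * b) m τ k (optimalGain (N * b) m τ k) < h2Factor (N * b) m τ k γ :=
    fun γ hγ hne => h2Factor_optimalGain_lt hlam hm hτ hk hcond.le hγ hne
  refine ⟨optimalGain_pos hlam hτ hk hcond, fun γ hγ => ?_, hlt⟩
  rcases eq_or_ne γ (optimalGain (N * b) m τ k) with rfl | hne
  · exact le_rfl
  · exact (hlt γ hγ hne).le
end

section
/- Let N, b, m, τ, k be positive reals with Nbmτ ≤ 1. Then the function g(γ) = 1/(1 + (γτNb + k)/(γNb(γτNb + k) + k²mNb)) is nondecreasing on [0, ∞), so its infimum over γ ≥ 0 is attained at γ* = 0. -/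
/-!
Write β = N b and A(γ) = γτβ + k > 0. Then g = 1 / (1 + 1 / h) with
h(γ) = D(γ) / A(γ) = βγ + k²mβ / A(γ), so it suffices that h is nondecreasing on [0, ∞).
For 0 ≤ x ≤ y the drop of the second term is k²mβ · τβ (y - x) / (A(x) A(y)), and since
A(x) A(y) ≥ k² it is at most mτβ · β (y - x) ≤ β (y - x), the rise of the first term.
-/

open Set

lemma monotoneOn_mul_add_div_linear {a c p k : ℝ} (hk : 0 < k) (hp : 0 ≤ p) (hc : 0 ≤ c)
    (hcp : c * p ≤ a * k ^ 2) :
    MonotoneOn (fun x => a * x + c / (p * x + k)) (Ici 0) := by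
  intro x (hx : 0 ≤ x) y (hy : 0 ≤ y) hxy
  have hAx : k ≤ p * x + k := by nlinarith
  have hAy : k ≤ p * y + k := by nlinarith
  have hsq : k ^ 2 ≤ (p * x + k) * (p * y + k) := by nlinarith
  have hdrop : c / (p * x + k) - c / (p * y + k) ≤ a * (y - x) :=
    calc c / (p * x + k) - c / (p * y + k)
        = c * p * (y - x) / ((p * x + k) * (p * y + k)) := by
          field_simp [(by linarith : p * x + k ≠ 0), (by linarith : p * y + k ≠ 0)]
          ring
      _ ≤ c * p * (y - x) / k ^ 2 :=
          div_le_div_of_nonneg_left (by have := sub_nonneg.2 hxy; positivity) (by positivity) hsq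
      _ ≤ a * (y - x) := by
          rw [div_le_iff₀ (by positivity)]
          nlinarith [sub_nonneg.2 hxy]
  linarith

lemma MonotoneOn.one_div_one_add_one_div {α : Type*} [Preorder α] {f : α → ℝ} {s : Set α}
    (hf : MonotoneOn f s) (hpos : ∀ x ∈ s, 0 < f x) :
    MonotoneOn (fun x => 1 / (1 + 1 / f x)) s := by
  intro x hx y hy hxy
  have hfy := hpos y hy
  exact one_div_le_one_div_of_le (add_pos one_pos (one_div_pos.2 hfy))
    (by gcongr; exacts [hpos x hx, hf hx hy hxy])

theorem dapi_gamma_star_zero_complete_graph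
    (N b m τ k : ℝ) (hN : 0 < N) (hb : 0 < b) (hm : 0 < m) (hτ : 0 < τ) (hk : 0 < k)
    (hcond : N * b * m * τ ≤ 1) :
    MonotoneOn (fun γ : ℝ => 1 / (1 + (γ * τ * (N * b) + k) /
        (γ * (N * b) * (γ * τ * (N * b) + k) + k ^ 2 * m * (N * b)))) (Set.Ici 0) ∧
    (∀ γ : ℝ, 0 ≤ γ →
      1 / (1 + ((0 : ℝ) * τ * (N * b) + k) /
          ((0 : ℝ) * (N * b) * ((0 : ℝ) * τ * (N * b) + k) + k ^ 2 * m * (N * b)))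
        ≤ 1 / (1 + (γ * τ * (N * b) + k) /
          (γ * (N * b) * (γ * τ * (N * b) + k) + k ^ 2 * m * (N * b)))) := by
  have hh : MonotoneOn (fun γ => N * b * γ + k ^ 2 * m * (N * b) / (τ * (N * b) * γ + k))
      (Ici 0) :=
    monotoneOn_mul_add_div_linear hk (by positivity) (by positivity)
      (by nlinarith [mul_le_mul_of_nonneg_left hcond (by positivity : 0 ≤ k ^ 2 * (N * b))])
  have hg := hh.one_div_one_add_one_div fun γ (hγ : 0 ≤ γ) => by positivity
  have hmono_le {f : ℝ → ℝ} (hf : MonotoneOn f (Ici 0)) :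
      MonotoneOn f (Ici 0) ∧ ∀ γ : ℝ, 0 ≤ γ → f 0 ≤ f γ :=
    ⟨hf, fun γ hγ => hf self_mem_Ici hγ hγ⟩
  refine hmono_le (hg.congr fun γ (hγ : 0 ≤ γ) => ?_)
  rw [← one_div_div _ (γ * τ * (N * b) + k)]
  field_simp
end

section
/- For a 2×2 system with A = [[0, 1], [−a, −1/τ]], B = [0, 1/τ]ᵀ, C = [√c, 0] where a = (m/τ)λ > 0, c = αλ > 0, τ > 0: the solution X of the Lyapunov equation AᵀX + XA = −CᵀC yields BᵀXB = α/(2m). In particular this value is independent of λ and τ. -/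
open Matrix

section Companion

variable {R : Type*} [CommRing R]

/-- Only the symmetric part `X 0 1 + X 1 0` enters: the `(0,0)` entry of the Lyapunov equation
gives `a (X 0 1 + X 1 0) = k²`, the `(1,1)` entry gives `X 0 1 + X 1 0 = 2 b X 1 1`. -/
theorem companion_lyapunov_mul_apply_one_one (a b k : R) (X : Matrix (Fin 2) (Fin 2) R)
    (hX : (!![0, 1; -a, -b])ᵀ * X + X * !![0, 1; -a, -b] = -((!![k, 0])ᵀ * !![k, 0])) :
    2 * a * b * X 1 1 = k ^ 2 := by
  have h00 := congrFun (congrFun hX 0) 0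
  have h11 := congrFun (congrFun hX 1) 1
  simp only [mul_apply, Matrix.add_apply, Matrix.neg_apply, transpose_apply, Fin.sum_univ_two,
    Fin.sum_univ_one, of_apply, cons_val', cons_val_zero, cons_val_one, empty_val', cons_val_fin_one] at h00 h11
  linear_combination -h00 - a * h11

theorem transpose_mul_mul_apply_of_col_zero (β : R) (X : Matrix (Fin 2) (Fin 2) R) :
    ((!![0; β])ᵀ * X * !![0; β]) 0 0 = β ^ 2 * X 1 1 := by
  simp only [mul_apply, transpose_apply, Fin.sum_univ_two, of_apply, cons_val', cons_val_zero,
    cons_val_one, empty_val', cons_val_fin_one]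
  ring

end Companion

theorem droop_mode_h2_norm
    (m τ lam α : ℝ) (hm : 0 < m) (hτ : 0 < τ) (hlam : 0 < lam) (hα : 0 < α)
    (A : Matrix (Fin 2) (Fin 2) ℝ) (B : Matrix (Fin 2) (Fin 1) ℝ) (C : Matrix (Fin 1) (Fin 2) ℝ)
    (hA : A = !![0, 1; -((m / τ) * lam), -(1 / τ)])
    (hB : B = !![0; 1 / τ])
    (hC : C = !![Real.sqrt (α * lam), 0])
    (X : Matrix (Fin 2) (Fin 2) ℝ)
    (hX : Aᵀ * X + X * A = -(Cᵀ * C)) :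
    (Bᵀ * X * B) 0 0 = α / (2 * m) := by
  subst hA hB hC
  have hX11 := companion_lyapunov_mul_apply_one_one _ _ _ X hX
  rw [Real.sq_sqrt (by positivity)] at hX11
  rw [transpose_mul_mul_apply_of_col_zero]
  field_simp at hX11 ⊢
  exact hX11
end

section
/- Let A = [[0,1,0], [−mλ/τ, −1/τ, 1/τ], [0, −1/k, −γλ/k]], B = (0, 1/τ, 0)ᵀ, C = (√(αλ), 0, 0), with m, λ, τ, k, γ, α all positive. Then A is Hurwitz and, where X solves AᵀX + XA = −CᵀC, we have BᵀXB = (α/(2m)) · 1/(1 + (γτλ + k)/(γλ(γτλ + k) + k²mλ)). -/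
set_option maxHeartbeats 1000000

lemma dapi_key (p q r s c x11 u v w x22 : ℝ)
    (hD : 2*p*((q+s)*(r+s)+p) ≠ 0)
    (S0 : p*u = c)
    (S1 : u - 2*q*x11 - r*w = 0)
    (S2 : q*w - 2*s*x22 = 0)
    (S3 : v - (q+s)*w + 2*q*x11 - 2*r*x22 = 0)
    (S4 : q*u - s*v - p*w = 0) :
    q*x11*q = c*q/(2*p) * ((s*(q+s)+p)/((q+s)*(r+s)+p)) := by
  have hw : w*((q+s)*(r+s)+p) = (q+s)*u := by
    linear_combination -S4 - s*S3 - s*S1 + r*S2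
  rw [div_mul_div_comm, eq_div_iff hD]
  linear_combination (-(p*q*((q+s)*(r+s)+p)))*S1 - r*p*q*hw + q*(s*(q+s)+p)*S0

open Matrix
theorem dapi_mode_h2_norm
    (m lam τ k γ α : ℝ) (hm : 0 < m) (hlam : 0 < lam) (hτ : 0 < τ) (hk : 0 < k)
    (hγ : 0 < γ) (hα : 0 < α)
    (A : Matrix (Fin 3) (Fin 3) ℝ) (B : Matrix (Fin 3) (Fin 1) ℝ) (C : Matrix (Fin 1) (Fin 3) ℝ)
    (hA : A = !![0, 1, 0; -(m * lam / τ), -(1 / τ), 1 / τ; 0, -(1 / k), -(γ * lam / k)])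
    (hB : B = !![0; 1 / τ; 0])
    (hC : C = !![Real.sqrt (α * lam), 0, 0]) :
    (∀ z : ℂ, Matrix.det (z • (1 : Matrix (Fin 3) (Fin 3) ℂ) - A.map (Complex.ofReal)) = 0 →
      z.re < 0) ∧
    (∀ X : Matrix (Fin 3) (Fin 3) ℝ, Aᵀ * X + X * A = -(Cᵀ * C) →
      (Bᵀ * X * B) 0 0 = (α / (2 * m)) * (1 / (1 + (γ * τ * lam + k) /
        (γ * lam * (γ * τ * lam + k) + k ^ 2 * m * lam)))) := by
  subst hA hB hC
  constructor
  · intro z hz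
    simp [Matrix.det_fin_three, Matrix.map_apply] at hz
    set a : ℝ := 1/τ + γ*lam/k with ha_def
    set b : ℝ := (γ*lam+1)/(τ*k) + m*lam/τ with hb_def
    set c : ℝ := m*γ*lam^2/(τ*k) with hc_def
    have ha : 0 < a := by positivity
    have hb : 0 < b := by positivity
    have hc : 0 < c := by positivity
    have hab : c < a*b := by
      have h1 : a*b - c = ((γ*lam+1)*k + m*lam*k^2 + γ*lam*(γ*lam+1)*τ)/(τ^2*k^2) := by
        rw [ha_def, hb_def, hc_def]; field_simp; ring
      have h2 : (0:ℝ) < ((γ*lam+1)*k + m*lam*k^2 + γ*lam*(γ*lam+1)*τ)/(τ^2*k^2) := by positivity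
      linarith [h1 ▸ h2]
    have E : z^3 + (a:ℂ)*z^2 + (b:ℂ)*z + (c:ℂ) = 0 := by
      rw [ha_def, hb_def, hc_def]
      push_cast
      linear_combination hz
    set x := z.re with hx_def
    set y := z.im with hy_def
    have hre : x^3 - 3*x*y^2 + a*(x^2-y^2) + b*x + c = 0 := by
      have h := congrArg Complex.re E
      simp only [pow_succ, pow_zero, one_mul, Complex.add_re, Complex.mul_re, Complex.mul_im,
        Complex.ofReal_re, Complex.ofReal_im, Complex.zero_re, zero_mul, mul_zero, zero_sub,
        sub_zero, zero_add, add_zero, neg_zero] at h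
      linear_combination h
    have him : 3*x^2*y - y^3 + 2*a*x*y + b*y = 0 := by
      have h := congrArg Complex.im E
      simp only [pow_succ, pow_zero, one_mul, Complex.add_im, Complex.mul_re, Complex.mul_im,
        Complex.ofReal_re, Complex.ofReal_im, Complex.zero_im, zero_mul, mul_zero, zero_sub,
        sub_zero, zero_add, add_zero, neg_zero] at h
      linear_combination h
    by_contra hcon
    push_neg at hcon
    rcases eq_or_ne y 0 with hy0 | hy0
    · rw [hy0] at hre
      nlinarith [mul_nonneg (mul_nonneg hcon hcon) hcon,
        mul_nonneg ha.le (mul_nonneg hcon hcon), mul_nonneg hb.le hcon]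
    · have hQ : 3*x^2 - y^2 + 2*a*x + b = 0 := by
        have h' : y * (3*x^2 - y^2 + 2*a*x + b) = 0 := by linear_combination him
        exact (mul_eq_zero.mp h').resolve_left hy0
      have hQ2 : (3*x + a) * (3*x^2 - y^2 + 2*a*x + b) = 0 := mul_eq_zero_of_right _ hQ
      nlinarith [hre, hQ2, mul_nonneg (mul_nonneg hcon hcon) hcon,
        mul_nonneg ha.le (mul_nonneg hcon hcon), mul_nonneg hb.le hcon,
        mul_nonneg (mul_nonneg ha.le ha.le) hcon]
  · intro X hX
    have hsq : Real.sqrt (α*lam) * Real.sqrt (α*lam) = α*lam :=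
      Real.mul_self_sqrt (by positivity)
    have e00 := congrFun (congrFun hX 0) 0
    have e11 := congrFun (congrFun hX 1) 1
    have e22 := congrFun (congrFun hX 2) 2
    have e02 := congrFun (congrFun hX 0) 2
    have e20 := congrFun (congrFun hX 2) 0
    have e12 := congrFun (congrFun hX 1) 2
    have e21 := congrFun (congrFun hX 2) 1
    simp [Matrix.mul_apply, Fin.sum_univ_three, Matrix.transpose_apply, Matrix.vecHead,
      Matrix.vecTail] at e00 e11 e22 e02 e20 e12 e21
    set p : ℝ := m*lam/τ with hp_def
    set q : ℝ := 1/τ with hq_def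
    set r : ℝ := 1/k with hr_def
    set s : ℝ := γ*lam/k with hs_def
    have key := dapi_key p q r s (α*lam) (X 1 1) (X 0 1 + X 1 0) (X 0 2 + X 2 0)
      (X 1 2 + X 2 1) (X 2 2)
      (by rw [hp_def, hq_def, hr_def, hs_def]; positivity)
      (by rw [hp_def]; linear_combination -e00 + hsq)
      (by linear_combination e11)
      (by linear_combination e22)
      (by linear_combination e12 + e21)
      (by linear_combination e02 + e20)
    have hgoal : (!![0; 1 / τ; 0]ᵀ * X * !![0; 1 / τ; 0]) 0 0 = q * X 1 1 * q := by
      simp [Matrix.mul_apply, Fin.sum_univ_three, Matrix.transpose_apply, Matrix.vecHead,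
        Matrix.vecTail, hq_def]
    rw [hgoal, key, hp_def, hq_def, hr_def, hs_def]
    have hN : (0:ℝ) < γ * lam * (γ * τ * lam + k) + k ^ 2 * m * lam := by positivity
    have hN2 : (0:ℝ) < 1 + (γ * τ * lam + k) / (γ * lam * (γ * τ * lam + k) + k ^ 2 * m * lam) := by
      positivity
    field_simp
    ring
end

section
/- If the line graph on N vertices has uniform edge weight b > 0, then the nonzero eigenvalues of its Laplacian are λ_n = 2b(1 − cos(π(n−1)/N)) = 4b·sin²(π(n−1)/(2N)) for n = 2,...,N, and each satisfies λ_n < 4b ≤ Nb for N ≥ 4; consequently, by monotonicity of the per-mode DAPI loss factor in λ, the DAPI transient losses on the line graph are strictly smaller than on the complete graph with the same edge weight b (for the same parameters m, k, τ, γ > 0 and N ≥ 4). -/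
/-!
The path Laplacian acts on a vector as the second difference `2 u j - u (j - 1) - u (j + 1)`
with reflecting ends. The modes `u j = cos (θ (j + 1/2))` with `θ = π j / N` satisfy the
reflection conditions, so they are eigenvectors with eigenvalue
`2 b (1 - cos θ) = 4 b sin² (θ / 2) < 4 b ≤ N b`, the nonzero eigenvalue of the complete graph.
The per-mode loss factor is strictly increasing in the eigenvalue, so the line graph loses less
in every mode.
-/

open Matrix Real

noncomputable def pathLaplacian (N : ℕ) (b : ℝ) : Matrix (Fin N) (Fin N) ℝ :=
  Matrix.of fun i j =>
    if i = j then
      ((if (i : ℕ) = 0 then 0 else 1) + (if (i : ℕ) = N - 1 then 0 else 1)) * b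
    else if (i : ℕ) + 1 = (j : ℕ) ∨ (j : ℕ) + 1 = (i : ℕ) then -b else 0

theorem Fin.sum_univ_ite_val_eq {M : Type*} [AddCommMonoid M] {N : ℕ} (u : ℕ → M) (k : ℕ) :
    ∑ j : Fin N, (if (j : ℕ) = k then u j else 0) = if k < N then u k else 0 := by
  simp [Fin.sum_univ_eq_sum_range (fun j => if j = k then u j else 0)]

theorem pathLaplacian_apply_eq {N : ℕ} (b : ℝ) (i j : Fin N) :
    pathLaplacian N b i j =
      b * ((if (i : ℕ) = 0 then 0 else
              (if (j : ℕ) = i then 1 else 0) - (if (j : ℕ) = i - 1 then 1 else 0)) +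
           (if (i : ℕ) = N - 1 then 0 else
              (if (j : ℕ) = i then 1 else 0) - (if (j : ℕ) = i + 1 then 1 else 0))) := by
  simp only [pathLaplacian, of_apply, Fin.ext_iff]
  split_ifs <;> first | ring1 | (exfalso; omega)

theorem pathLaplacian_mulVec {N : ℕ} (b : ℝ) (u : ℕ → ℝ) (i : Fin N) :
    (pathLaplacian N b *ᵥ fun j => u j) i =
      b * ((if (i : ℕ) = 0 then 0 else u i - u (i - 1)) +
           (if (i : ℕ) = N - 1 then 0 else u i - u (i + 1))) := by
  simp only [mulVec, dotProduct, pathLaplacian_apply_eq, mul_assoc, ← Finset.mul_sum]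
  congr 1
  have hi := i.isLt
  split_ifs <;>
    simp only [add_mul, sub_mul, ite_mul, one_mul, zero_mul, Finset.sum_add_distrib,
      Finset.sum_sub_distrib, Fin.sum_univ_ite_val_eq, Finset.sum_const_zero]
  all_goals split_ifs <;> first | ring1 | (exfalso; omega)

/-- With the half-integer phase the ghost values satisfy `u (-1) = u 0` and, when
`sin (θ N) = 0`, `u N = u (N - 1)`, so the boundary rows are the interior second difference. -/
theorem pathLaplacian_mulVec_cos {N : ℕ} (b θ : ℝ) (hθ : sin (θ * N) = 0) :
    pathLaplacian N b *ᵥ (fun j : Fin N => cos (θ * ((j : ℕ) + 1 / 2))) =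
      (2 * b * (1 - cos θ)) • fun j : Fin N => cos (θ * ((j : ℕ) + 1 / 2)) := by
  ext i
  rw [pathLaplacian_mulVec b (fun n => cos (θ * (n + 1 / 2))) i, Pi.smul_apply, smul_eq_mul]
  set x := θ * ((i : ℕ) + 1 / 2) with hx
  have left : (if (i : ℕ) = 0 then 0 else cos x - cos (θ * (((i - 1 : ℕ) : ℝ) + 1 / 2))) =
      cos x - cos (x - θ) := by
    split_ifs with h0
    · rw [hx, h0, ← cos_neg]; ring_nf
    · rw [Nat.cast_pred (Nat.pos_of_ne_zero h0), hx]; ring_nf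
  have right : (if (i : ℕ) = N - 1 then 0 else cos x - cos (θ * (((i + 1 : ℕ) : ℝ) + 1 / 2))) =
      cos x - cos (x + θ) := by
    split_ifs with hN
    · have hx' : x = θ * N - θ / 2 := by
        rw [hx, hN, Nat.cast_pred (by omega)]; ring
      rw [hx', show θ * N - θ / 2 + θ = θ * N + θ / 2 by ring, cos_add, cos_sub, hθ]; ring
    · rw [hx]; push_cast; ring_nf
  rw [left, right, cos_sub, cos_add]
  ring

theorem pathLaplacian_det_eq_zero {N j : ℕ} (b : ℝ) (hj : j < N) :
    det ((2 * b * (1 - cos (π * j / N))) • (1 : Matrix (Fin N) (Fin N) ℝ) - pathLaplacian N b)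
      = 0 := by
  have hN : (0 : ℝ) < N := by exact_mod_cast j.zero_le.trans_lt hj
  rw [← exists_mulVec_eq_zero_iff]
  refine ⟨fun i : Fin N => cos (π * j / N * ((i : ℕ) + 1 / 2)), fun h => ?_, ?_⟩
  · have h0 := congrFun h ⟨0, by omega⟩
    have hjN : (j : ℝ) / N < 1 := (div_lt_one hN).2 (by exact_mod_cast hj)
    have harg : π * j / N * (((0 : ℕ) : ℝ) + 1 / 2) = π / 2 * (j / N) := by push_cast; ring
    refine (cos_pos_of_mem_Ioo ⟨?_, ?_⟩).ne' h0 <;> rw [harg]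
    · have : 0 ≤ π / 2 * (j / N) := by positivity
      linarith [pi_pos]
    · exact mul_lt_of_lt_one_right (by positivity) hjN
  · rw [sub_mulVec, smul_mulVec, one_mulVec, pathLaplacian_mulVec_cos, sub_self]
    rw [div_mul_cancel₀ _ hN.ne', mul_comm]
    exact sin_nat_mul_pi j

theorem four_mul_sin_sq_div_two_mul (b y c : ℝ) :
    4 * b * sin (y / (2 * c)) ^ 2 = 2 * b * (1 - cos (y / c)) := by
  rw [show y / c = 2 * (y / (2 * c)) by ring, cos_two_mul, ← sin_sq_add_cos_sq (y / (2 * c))]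
  ring

theorem four_mul_sin_sq_mem_Ioo {N n : ℕ} {b : ℝ} (hb : 0 < b) (hn : 2 ≤ n) (hnN : n ≤ N) :
    4 * b * sin (π * ((n : ℝ) - 1) / (2 * N)) ^ 2 ∈ Set.Ioo 0 (4 * b) := by
  have h1 : (1 : ℝ) ≤ n - 1 := by
    rw [le_sub_iff_add_le]; exact_mod_cast hn
  have h2 : (n : ℝ) - 1 < N := by
    rw [sub_lt_iff_lt_add]; exact_mod_cast Nat.lt_succ_of_le hnN
  set a := π * ((n : ℝ) - 1) / (2 * N)
  have ha0 : 0 < a := div_pos (mul_pos pi_pos (by linarith)) (by linarith)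
  have ha1 : a < π / 2 := by
    rw [div_lt_div_iff₀ (by linarith) two_pos]
    nlinarith [pi_pos]
  have hsin0 : 0 < sin a := sin_pos_of_pos_of_lt_pi ha0 (by linarith)
  have hsin1 : sin a ^ 2 < 1 := by
    nlinarith [sin_sq_add_cos_sq a, cos_pos_of_mem_Ioo ⟨by linarith, ha1⟩]
  constructor
  · positivity
  · nlinarith

noncomputable def dapiLossFactor (m k τ γ x : ℝ) : ℝ :=
  1 / (1 + (γ * τ * x + k) / (γ * x * (γ * τ * x + k) + k ^ 2 * m * x))

theorem dapiLossFactor_strictMonoOn {m k τ γ : ℝ} (hm : 0 ≤ m) (hk : 0 < k) (hτ : 0 ≤ τ)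
    (hγ : 0 < γ) : StrictMonoOn (dapiLossFactor m k τ γ) (Set.Ioi 0) := by
  intro x (hx : 0 < x) y (hy : 0 < y) hxy
  unfold dapiLossFactor
  have hDx : 0 < γ * x * (γ * τ * x + k) + k ^ 2 * m * x := by positivity
  have hDy : 0 < γ * y * (γ * τ * y + k) + k ^ 2 * m * y := by positivity
  apply one_div_lt_one_div_of_lt (by positivity)
  rw [add_lt_add_iff_left, div_lt_div_iff₀ hDy hDx]
  have : 0 < (y - x) * (γ * (γ * τ * x + k) * (γ * τ * y + k) + k ^ 3 * m) := by
    have := sub_pos.2 hxy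
    positivity
  linear_combination this

theorem line_graph_beats_complete_graph
    (N : ℕ) (hN : 4 ≤ N) (b m k τ γ : ℝ) (hb : 0 < b) (hm : 0 < m) (hk : 0 < k)
    (hτ : 0 < τ) (hγ : 0 < γ)
    (L : Matrix (Fin N) (Fin N) ℝ)
    (hL : ∀ i j : Fin N, L i j =
      if i = j then
        ((if (i : ℕ) = 0 then 0 else 1) + (if (i : ℕ) = N - 1 then 0 else 1)) * b
      else if (i : ℕ) + 1 = (j : ℕ) ∨ (j : ℕ) + 1 = (i : ℕ) then -b else 0) :
    (∀ n : ℕ, 2 ≤ n → n ≤ N →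
      Matrix.det ((4 * b * Real.sin (π * ((n : ℝ) - 1) / (2 * N)) ^ 2) •
          (1 : Matrix (Fin N) (Fin N) ℝ) - L) = 0 ∧
      4 * b * Real.sin (π * ((n : ℝ) - 1) / (2 * N)) ^ 2 = 2 * b * (1 - Real.cos (π * ((n : ℝ) - 1) / N)) ∧
      4 * b * Real.sin (π * ((n : ℝ) - 1) / (2 * N)) ^ 2 < 4 * b ∧
      4 * b ≤ (N : ℝ) * b) ∧
    (∑ n ∈ Finset.Icc 2 N,
        1 / (1 + (γ * τ * (4 * b * Real.sin (π * ((n : ℝ) - 1) / (2 * N)) ^ 2) + k) /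
          (γ * (4 * b * Real.sin (π * ((n : ℝ) - 1) / (2 * N)) ^ 2) *
            (γ * τ * (4 * b * Real.sin (π * ((n : ℝ) - 1) / (2 * N)) ^ 2) + k) +
            k ^ 2 * m * (4 * b * Real.sin (π * ((n : ℝ) - 1) / (2 * N)) ^ 2))))
      < ∑ n ∈ Finset.Icc 2 N,
        1 / (1 + (γ * τ * ((N : ℝ) * b) + k) /
          (γ * ((N : ℝ) * b) * (γ * τ * ((N : ℝ) * b) + k) + k ^ 2 * m * ((N : ℝ) * b))) := by
  obtain rfl : L = pathLaplacian N b := Matrix.ext hL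
  have hNb : 4 * b ≤ N * b := by gcongr; exact_mod_cast hN
  refine ⟨fun n h2 hnN => ⟨?_, four_mul_sin_sq_div_two_mul b _ _,
    (four_mul_sin_sq_mem_Ioo hb h2 hnN).2, hNb⟩, ?_⟩
  · rw [four_mul_sin_sq_div_two_mul, ← Nat.cast_pred (by omega)]
    exact pathLaplacian_det_eq_zero b (by omega)
  · refine Finset.sum_lt_sum_of_nonempty ⟨N, Finset.mem_Icc.2 ⟨by omega, le_rfl⟩⟩ fun n hn => ?_
    obtain ⟨h2, hnN⟩ := Finset.mem_Icc.1 hn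
    obtain ⟨hpos, hlt⟩ := four_mul_sin_sq_mem_Ioo hb h2 hnN
    exact dapiLossFactor_strictMonoOn hm.le hk hτ.le hγ hpos (hpos.trans (hlt.trans_le hNb))
      (hlt.trans_le hNb)
end

section
/- For positive reals N, b, m, τ, k with Nbmτ > 1, let g(γ) = 1/(1 + (γτNb + k)/(γNb(γτNb + k) + k²mNb)) and γ* = (k/(Nbτ))(√(Nbmτ) − 1); then g(γ*) < g(0) = kmNb/(kmNb + 1). -/
theorem dapi_positive_gamma_beats_zero_gamma
    (N b m τ k : ℝ) (hN : 0 < N) (hb : 0 < b) (hm : 0 < m) (hτ : 0 < τ) (hk : 0 < k)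
    (hcond : 1 < N * b * m * τ) :
    (1 / (1 + ((0 : ℝ) * τ * (N * b) + k) /
        ((0 : ℝ) * (N * b) * ((0 : ℝ) * τ * (N * b) + k) + k ^ 2 * m * (N * b)))
      = k * m * N * b / (k * m * N * b + 1)) ∧
    1 / (1 + ((k / (N * b * τ)) * (Real.sqrt (N * b * m * τ) - 1) * τ * (N * b) + k) /
        ((k / (N * b * τ)) * (Real.sqrt (N * b * m * τ) - 1) * (N * b) *
          ((k / (N * b * τ)) * (Real.sqrt (N * b * m * τ) - 1) * τ * (N * b) + k) +
          k ^ 2 * m * (N * b)))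
      < k * m * N * b / (k * m * N * b + 1) := by
  set s := Real.sqrt (N * b * m * τ) with hs
  have hprod : 0 < N * b * m * τ := by positivity
  have hs2 : s ^ 2 = N * b * m * τ := Real.sq_sqrt hprod.le
  have hs1 : 1 < s := by
    nlinarith [Real.sqrt_nonneg (N * b * m * τ)]
  have h2s : 0 < 2 * s - 1 := by linarith
  have hkm : 0 < k * m * N * b := by positivity
  constructor
  · field_simp
    ring
  · have hE : ((k / (N * b * τ)) * (s - 1) * τ * (N * b) + k) /
        ((k / (N * b * τ)) * (s - 1) * (N * b) *
          ((k / (N * b * τ)) * (s - 1) * τ * (N * b) + k) +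
          k ^ 2 * m * (N * b)) = τ / (k * (2 * s - 1)) := by
      have hNum : (k / (N * b * τ)) * (s - 1) * τ * (N * b) + k = k * s := by
        field_simp; ring
      have hDen : (k / (N * b * τ)) * (s - 1) * (N * b) *
          ((k / (N * b * τ)) * (s - 1) * τ * (N * b) + k) +
          k ^ 2 * m * (N * b) = k ^ 2 / τ * (s * (2 * s - 1)) := by
        rw [hNum]
        field_simp
        linear_combination (-1) * hs2
      rw [hDen, hNum]
      rw [div_eq_div_iff (by positivity) (by positivity)]
      field_simp
    rw [hE]
    have key : 1 / (k * m * N * b) < τ / (k * (2 * s - 1)) := by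
      rw [div_lt_div_iff₀ hkm (by positivity)]
      have h1 : k * (2 * s - 1) < k * s ^ 2 := by
        nlinarith [mul_pos hk (mul_pos (sub_pos.2 hs1) (sub_pos.2 hs1))]
      nlinarith [hs2, mul_pos (mul_pos hm (mul_pos hN hb)) hτ]
    have hrhs : k * m * N * b / (k * m * N * b + 1) = 1 / (1 + 1 / (k * m * N * b)) := by
      field_simp
    rw [hrhs]
    apply one_div_lt_one_div_of_lt
    · positivity
    · linarith
end
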